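/- arXiv:2302.02943 — 3 statements merged into one kernel-verified Lean document; each statement's English description precedes it below -/
import Mathlib

section
/- Let A_{k+1} = { (t_1, …, t_{2k+2}) ∈ (ℝ_{≥0})^{2k+2} : t_2 ≤ t_4 ≤ … ≤ t_{2k+2} and t_{2s-1} ≤ t_{2s} for all 1 ≤ s ≤ k+1 }. Then ∫_{A_{k+1}} e^{-t_{2k+2}} dt_1 … dt_{2k+2} ≤ (4(k+1))^{k+1}. -/
/-!
Write the coordinates as pairs `(x_s, u_s) = (t_{2s+1}, t_{2s+2})`. Integrating out each
`x_s ∈ [0, u_s]` and peeling off the top pair shows that the part of `A_m` lying below height `v`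
has volume `v^{2m} / (2m)‼`, because `∫₀^v w · w^{2m} / (2m)‼ dw = v^{2m+2} / (2m+2)‼`. Hence the
integral equals `∫₀^∞ v^{2k+1} e^{-v} dv / (2k)‼ = (2k+1)! / (2k)‼ = (2k+1)‼ ≤ (2k+1)^k`.
-/

open MeasureTheory Set
open scoped ENNReal Nat

theorem lintegral_fin_snoc {α : Type*} [MeasureSpace α] [SigmaFinite (volume : Measure α)]
    {n : ℕ} {f : (Fin (n + 1) → α) → ℝ≥0∞} (hf : Measurable f) :
    ∫⁻ t, f t = ∫⁻ v, ∫⁻ s : Fin n → α, f (Fin.snoc s v) := by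
  set e := (MeasurableEquiv.piFinSuccAbove (fun _ : Fin (n + 1) => α) (Fin.last n)).symm
  have he : MeasurePreserving e := (volume_preserving_piFinSuccAbove _ _).symm
  rw [← he.lintegral_comp hf, Measure.volume_eq_prod,
    lintegral_prod (fun p => f (e p)) (hf.comp e.measurable).aemeasurable]
  refine lintegral_congr fun v => lintegral_congr fun s => congrArg f ?_
  exact Fin.insertNth_last' v s

theorem setLIntegral_Ioc_pow_div {v c : ℝ} (hv : 0 ≤ v) (hc : 0 ≤ c) (n : ℕ) :
    ∫⁻ w in Ioc 0 v, ENNReal.ofReal (w ^ n / c) = ENNReal.ofReal (v ^ (n + 1) / ((n + 1) * c)) := by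
  have hint : IntervalIntegrable (fun w : ℝ => w ^ n / c) volume 0 v :=
    ((continuous_pow n).div_const c).intervalIntegrable 0 v
  rw [← ofReal_integral_eq_lintegral_ofReal
      ((intervalIntegrable_iff_integrableOn_Ioc_of_le hv).1 hint)
      ((ae_restrict_iff' measurableSet_Ioc).2 (.of_forall fun w hw => by
        have := hw.1.le; positivity)),
    ← intervalIntegral.integral_of_le hv, intervalIntegral.integral_div, integral_pow]
  simp [div_div]

theorem integrableOn_Ioi_pow_mul_exp_neg (n : ℕ) :
    IntegrableOn (fun x : ℝ => x ^ n * Real.exp (-x)) (Ioi 0) := by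
  have := Real.GammaIntegral_convergent (s := n + 1) (by positivity)
  simp only [add_sub_cancel_right, Real.rpow_natCast] at this
  simpa only [mul_comm] using this

theorem integral_Ioi_pow_mul_exp_neg (n : ℕ) :
    ∫ x in Ioi (0 : ℝ), x ^ n * Real.exp (-x) = n ! := by
  rw [← Real.Gamma_nat_eq_factorial, Real.Gamma_eq_integral (by positivity)]
  simp only [add_sub_cancel_right, Real.rpow_natCast, mul_comm]

theorem Nat.doubleFactorial_two_mul_add_one_le (k : ℕ) : (2 * k + 1)‼ ≤ (2 * k + 1) ^ k := by
  rw [Nat.doubleFactorial_eq_prod_odd]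
  simpa using Finset.prod_le_pow_card (Finset.range k) (fun i => 2 * (i + 1) + 1) (2 * k + 1)
    fun i hi => by simp only [Finset.mem_range] at hi; omega

def staircase (n : ℕ) : Set (Fin n → ℝ) :=
  {t | (∀ i, 0 ≤ t i) ∧
    (∀ s : ℕ, (h : 2 * s + 3 < n) → t ⟨2 * s + 1, by omega⟩ ≤ t ⟨2 * s + 3, h⟩) ∧
    (∀ s : ℕ, (h : 2 * s + 1 < n) → t ⟨2 * s, by omega⟩ ≤ t ⟨2 * s + 1, h⟩)}

theorem isClosed_staircase (n : ℕ) : IsClosed (staircase n) := by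
  simp only [staircase, ofPred_and, ofPred_forall]
  refine .inter (isClosed_iInter fun i => isClosed_le (by fun_prop) (by fun_prop))
    (.inter ?_ ?_) <;>
    exact isClosed_iInter fun s => isClosed_iInter fun h =>
      isClosed_le (by fun_prop) (by fun_prop)

/-- The staircases with `m` steps lying below height `v ≥ 0`, encoded as those that remain
staircases after appending the step `(v, v)`. -/
def staircaseBelow (m : ℕ) (v : ℝ) : Set (Fin (2 * m) → ℝ) :=
  {r | (Fin.snoc (Fin.snoc r v) v : Fin (2 * m + 2) → ℝ) ∈ staircase (2 * m + 2)}

theorem measurableSet_staircaseBelow (m : ℕ) (v : ℝ) : MeasurableSet (staircaseBelow m v) :=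
  ((isClosed_staircase _).preimage (by fun_prop)).measurableSet

theorem snoc_snoc_apply {n : ℕ} (r : Fin n → ℝ) (x v : ℝ) (i : ℕ) (h : i < n + 2) :
    (Fin.snoc (Fin.snoc r x) v : Fin (n + 2) → ℝ) ⟨i, h⟩ =
      if h' : i < n then r ⟨i, h'⟩ else if i = n then x else v := by
  simp only [Fin.snoc, Fin.castLT_mk, cast_eq]
  split_ifs <;> first | rfl | omega

theorem snoc_snoc_mem_staircase_iff {m : ℕ} (r : Fin (2 * m) → ℝ) (x v : ℝ) :
    (Fin.snoc (Fin.snoc r x) v : Fin (2 * m + 2) → ℝ) ∈ staircase (2 * m + 2) ↔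
      r ∈ staircase (2 * m) ∧ (∀ h : 0 < m, r ⟨2 * m - 1, by omega⟩ ≤ v) ∧ 0 ≤ x ∧ x ≤ v := by
  simp only [staircase, mem_ofPred_eq, Fin.forall_iff, snoc_snoc_apply]
  constructor
  · rintro ⟨h0, h1, h2⟩
    refine ⟨⟨fun i hi => ?_, fun s hs => ?_, fun s hs => ?_⟩, fun hm => ?_, ?_, ?_⟩
    · simpa [hi] using h0 i (by omega)
    · simpa [hs, show 2 * s + 1 < 2 * m by omega] using h1 s (by omega)
    · simpa [hs, show 2 * s < 2 * m by omega] using h2 s (by omega)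
    · have := h1 (m - 1) (by omega)
      simp only [show 2 * (m - 1) + 1 < 2 * m by omega, show ¬2 * (m - 1) + 3 < 2 * m by omega,
        show 2 * (m - 1) + 3 ≠ 2 * m by omega, dite_true, dite_false, if_false] at this
      convert this using 3
      omega
    · simpa using h0 (2 * m) (by omega)
    · simpa using h2 m (by omega)
  · rintro ⟨⟨h0, h1, h2⟩, hv, hx0, hxv⟩
    refine ⟨fun i hi => ?_, fun s hs => ?_, fun s hs => ?_⟩
    · split_ifs
      · exact h0 i ‹_›
      · exact hx0
      · exact hx0.trans hxv
    · by_cases hs' : 2 * s + 3 < 2 * m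
      · simpa [hs', show 2 * s + 1 < 2 * m by omega] using h1 s hs'
      · have hm : s + 1 = m := by omega
        subst hm
        simp only [show 2 * s + 1 < 2 * (s + 1) by omega, hs', dite_true, dite_false,
          show 2 * s + 3 ≠ 2 * (s + 1) by omega, if_false]
        convert hv (by omega) using 3
        omega
    · by_cases hs' : 2 * s + 1 < 2 * m
      · simpa [hs', show 2 * s < 2 * m by omega] using h2 s hs'
      · have hm : s = m := by omega
        subst hm
        simpa using hxv

theorem snoc_snoc_mem_staircase {m : ℕ} (r : Fin (2 * m) → ℝ) (x v : ℝ) :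
    (Fin.snoc (Fin.snoc r x) v : Fin (2 * m + 2) → ℝ) ∈ staircase (2 * m + 2) ↔
      r ∈ staircaseBelow m v ∧ x ∈ Icc 0 v := by
  simp only [staircaseBelow, mem_ofPred_eq, snoc_snoc_mem_staircase_iff, mem_Icc, le_refl,
    and_true]
  constructor
  · rintro ⟨hr, hv, hx0, hxv⟩
    exact ⟨⟨hr, hv, hx0.trans hxv⟩, hx0, hxv⟩
  · rintro ⟨⟨hr, hv, -⟩, hx0, hxv⟩
    exact ⟨hr, hv, hx0, hxv⟩

theorem staircaseBelow_zero {v : ℝ} (hv : 0 ≤ v) : staircaseBelow 0 v = univ := by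
  ext r
  simp only [staircaseBelow, mem_ofPred_eq, snoc_snoc_mem_staircase_iff]
  simp [staircase, hv]

theorem staircaseBelow_succ (m : ℕ) (v : ℝ) :
    staircaseBelow (m + 1) v =
      (fun t => t (Fin.last _)) ⁻¹' Iic v ∩ staircase (2 * m + 2) := by
  ext r
  simp only [staircaseBelow, mem_ofPred_eq, snoc_snoc_mem_staircase_iff, mem_inter_iff,
    mem_preimage, mem_Iic, le_refl, and_true]
  constructor
  · rintro ⟨hr, hv, -⟩
    exact ⟨hv m.succ_pos, hr⟩
  · rintro ⟨hv, hr⟩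
    exact ⟨hr, fun _ => hv, (hr.1 _).trans hv⟩

theorem lintegral_staircase_eq_lintegral_volume (m : ℕ) {f : ℝ → ℝ≥0∞} (hf : Measurable f) :
    ∫⁻ t in staircase (2 * m + 2), f (t (Fin.last _)) =
      ∫⁻ v, ENNReal.ofReal v * volume (staircaseBelow m v) * f v := by
  set g := (staircase (2 * m + 2)).indicator fun t => f (t (Fin.last _))
  have hg : Measurable g :=
    (hf.comp (measurable_pi_apply _)).indicator (isClosed_staircase _).measurableSet
  have hg_snoc : ∀ v x r, g (Fin.snoc (Fin.snoc r x) v) =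
      (Icc 0 v).indicator 1 x * ((staircaseBelow m v).indicator 1 r * f v) := by
    intro v x r
    classical
    simp only [g]
    rw [indicator_apply, snoc_snoc_mem_staircase, Fin.snoc_last]
    by_cases hx : x ∈ Icc 0 v <;> by_cases hr : r ∈ staircaseBelow m v <;> simp [hx, hr]
  rw [← lintegral_indicator (isClosed_staircase _).measurableSet, lintegral_fin_snoc hg]
  refine lintegral_congr fun v => ?_
  rw [lintegral_fin_snoc (f := fun s => g (Fin.snoc s v)) (hg.comp (by fun_prop))]
  simp_rw [hg_snoc]
  simp_rw [lintegral_const_mul _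
    ((measurable_one.indicator (measurableSet_staircaseBelow m v)).mul_const _)]
  rw [lintegral_mul_const _ (measurable_one.indicator measurableSet_Icc),
    lintegral_mul_const _ (measurable_one.indicator (measurableSet_staircaseBelow m v)),
    lintegral_indicator_one measurableSet_Icc,
    lintegral_indicator_one (measurableSet_staircaseBelow m v), Real.volume_Icc, sub_zero,
    mul_assoc]

theorem lintegral_staircase_of_volume {m : ℕ}
    (hV : ∀ v, 0 < v → volume (staircaseBelow m v) = ENNReal.ofReal (v ^ (2 * m) / (2 * m)‼))
    {f : ℝ → ℝ≥0∞} (hf : Measurable f) :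
    ∫⁻ t in staircase (2 * m + 2), f (t (Fin.last _)) =
      ∫⁻ v in Ioi 0, ENNReal.ofReal (v ^ (2 * m + 1) / (2 * m)‼) * f v := by
  rw [lintegral_staircase_eq_lintegral_volume m hf, ← lintegral_indicator measurableSet_Ioi]
  refine lintegral_congr fun v => ?_
  rcases le_or_gt v 0 with hv | hv
  · rw [indicator_of_notMem (show v ∉ Ioi 0 from not_lt.2 hv), ENNReal.ofReal_of_nonpos hv,
      zero_mul, zero_mul]
  · rw [indicator_of_mem (show v ∈ Ioi 0 from hv), hV v hv, ← ENNReal.ofReal_mul hv.le, pow_succ]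
    congr 2
    ring

theorem volume_staircaseBelow (m : ℕ) {v : ℝ} (hv : 0 ≤ v) :
    volume (staircaseBelow m v) = ENNReal.ofReal (v ^ (2 * m) / (2 * m)‼) := by
  induction m generalizing v with
  | zero => simp [staircaseBelow_zero hv, volume_pi]
  | succ m ih =>
    have hT : MeasurableSet ((fun t : Fin (2 * m + 2) → ℝ => t (Fin.last _)) ⁻¹' Iic v) :=
      measurableSet_Iic.preimage (measurable_pi_apply _)
    rw [staircaseBelow_succ, ← Measure.restrict_apply hT, ← lintegral_indicator_one hT]
    change ∫⁻ t in staircase (2 * m + 2), (Iic v).indicator 1 (t (Fin.last _)) = _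
    rw [lintegral_staircase_of_volume (fun w hw => ih hw.le)
      (measurable_one.indicator measurableSet_Iic)]
    simp_rw [← indicator_mul_right _ (fun w => ENNReal.ofReal (w ^ (2 * m + 1) / (2 * m)‼)),
      Pi.one_apply, mul_one]
    rw [lintegral_indicator measurableSet_Iic, Measure.restrict_restrict measurableSet_Iic,
      inter_comm, Ioi_inter_Iic, setLIntegral_Ioc_pow_div hv (by positivity)]
    congr 1
    rw [show 2 * (m + 1) = 2 * m + 2 by ring, Nat.doubleFactorial_add_two]
    push_cast
    ring

theorem integral_staircase_exp (k : ℕ) :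
    ∫ t in staircase (2 * k + 2), Real.exp (-t (Fin.last _)) = (2 * k + 1)‼ := by
  have hcont : Continuous fun t : Fin (2 * k + 2) → ℝ => Real.exp (-t (Fin.last _)) := by fun_prop
  rw [integral_eq_lintegral_of_nonneg_ae (.of_forall fun t => (Real.exp_pos _).le)
      hcont.aestronglyMeasurable,
    lintegral_staircase_of_volume (f := fun v => ENNReal.ofReal (Real.exp (-v)))
      (fun v hv => volume_staircaseBelow k hv.le) (by fun_prop)]
  have hmul : ∀ v : ℝ,
      ENNReal.ofReal (v ^ (2 * k + 1) / (2 * k)‼) * ENNReal.ofReal (Real.exp (-v)) =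
        ENNReal.ofReal (v ^ (2 * k + 1) * Real.exp (-v) / (2 * k)‼) := fun v => by
    rw [← ENNReal.ofReal_mul' (Real.exp_pos _).le, div_mul_eq_mul_div]
  simp_rw [hmul]
  rw [← ofReal_integral_eq_lintegral_ofReal ((integrableOn_Ioi_pow_mul_exp_neg _).div_const _)
      ((ae_restrict_iff' measurableSet_Ioi).2 (.of_forall fun v hv => by
        have := (mem_Ioi.1 hv).le; positivity)),
    integral_div, integral_Ioi_pow_mul_exp_neg, ENNReal.toReal_ofReal (by positivity),
    Nat.factorial_eq_mul_doubleFactorial, Nat.cast_mul]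
  have hpos : (0 : ℝ) < (2 * k)‼ := by exact_mod_cast Nat.doubleFactorial_pos _
  field_simp

/-- The integral of `e^{-t_{2k+2}}` over the region
`A_{k+1} = { t ∈ ℝ₊^{2k+2} : t₂ ≤ t₄ ≤ … ≤ t_{2k+2}, t_{2s-1} ≤ t_{2s} }`
is at most `(4(k+1))^{k+1}`.  (Coordinates are indexed from 0 here, so the
`1`-based coordinate `t_j` is `t ⟨j-1⟩`.) -/
theorem stmt_3 (k : ℕ) :
    (∫ t in {t : Fin (2 * k + 2) → ℝ |
        (∀ i, 0 ≤ t i) ∧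
        (∀ s : ℕ, (h : 2 * s + 3 < 2 * k + 2) →
          t ⟨2 * s + 1, by omega⟩ ≤ t ⟨2 * s + 3, h⟩) ∧
        (∀ s : ℕ, (h : 2 * s + 1 < 2 * k + 2) →
          t ⟨2 * s, by omega⟩ ≤ t ⟨2 * s + 1, h⟩)},
      Real.exp (-(t ⟨2 * k + 1, by omega⟩))) ≤ (4 * (k + 1) : ℝ) ^ (k + 1) := by
  have hbound : (2 * k + 1)‼ ≤ (4 * (k + 1)) ^ (k + 1) :=
    (Nat.doubleFactorial_two_mul_add_one_le k).trans <|
      (Nat.pow_le_pow_left (by omega) k).trans (Nat.pow_le_pow_right (by omega) k.le_succ)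
  calc _ = ((2 * k + 1)‼ : ℝ) := integral_staircase_exp k
    _ ≤ _ := by exact_mod_cast hbound
end

section
/- Let g : ℝ → ℝ be given by g(x) = ∫_ℝ e^{ixy} ĝ(y) dy for an integrable function ĝ with ∫_ℝ |y ĝ(y)| dy < ∞. Then for any two self-adjoint matrices X, Y ∈ M_N(ℂ), the operator norm satisfies ‖g(X) - g(Y)‖ ≤ ‖X - Y‖ · ∫_ℝ |y ĝ(y)| dy. -/
open MeasureTheory Matrix
open scoped Matrix.Norms.L2Operator

/-!
The derivative of `t ↦ exp (t • a) * exp ((1 - t) • b)` is `exp (t • a) * (a - b) * exp ((1 - t) • b)`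
(Duhamel's formula), so `‖exp a - exp b‖ ≤ ‖a - b‖` as soon as the exponentials along both
segments are contractions. This is the case for skew-adjoint `a`, `b` in a C⋆-algebra, where they
are unitary. Taking `a = (i y) • X`, `b = (i y) • Y` gives `‖e^{iyX} - e^{iyY}‖ ≤ |y| ‖X - Y‖`, and
integrating this against `ĝ` gives the bound.
-/

open NormedSpace Set

section BanachAlgebra

variable {A : Type*} [NormedRing A] [NormedAlgebra ℝ A] [CompleteSpace A]

theorem hasDerivAt_exp_smul_mul_exp_one_sub_smul (a b : A) (t : ℝ) :
    HasDerivAt (fun s : ℝ => exp (s • a) * exp ((1 - s) • b))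
      (exp (t • a) * (a - b) * exp ((1 - t) • b)) t := by
  have hb : HasDerivAt (fun s : ℝ => exp ((1 - s) • b)) ((-1 : ℝ) • (b * exp ((1 - t) • b))) t :=
    (hasDerivAt_exp_smul_const' b (1 - t)).scomp t ((hasDerivAt_id t).const_sub 1)
  refine ((hasDerivAt_exp_smul_const a t).mul hb).congr_deriv ?_
  rw [neg_one_smul, mul_neg, ← mul_assoc, ← sub_eq_add_neg, mul_sub, sub_mul]

theorem norm_exp_sub_exp_le_of_norm_exp_smul_le_one {a b : A}
    (ha : ∀ t ∈ Icc (0 : ℝ) 1, ‖exp (t • a)‖ ≤ 1) (hb : ∀ t ∈ Icc (0 : ℝ) 1, ‖exp (t • b)‖ ≤ 1) :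
    ‖exp a - exp b‖ ≤ ‖a - b‖ := by
  have hbound : ∀ t ∈ Ico (0 : ℝ) 1,
      ‖exp (t • a) * (a - b) * exp ((1 - t) • b)‖ ≤ ‖a - b‖ := by
    rintro t ⟨h0, h1⟩
    calc _ ≤ ‖exp (t • a)‖ * ‖a - b‖ * ‖exp ((1 - t) • b)‖ := norm_mul₃_le
      _ ≤ 1 * ‖a - b‖ * 1 := by
          gcongr
          exacts [ha t ⟨h0, h1.le⟩, hb (1 - t) ⟨by linarith, by linarith⟩]
      _ = ‖a - b‖ := by ring
  simpa using norm_image_sub_le_of_norm_deriv_le_segment_01'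
    (fun t _ => (hasDerivAt_exp_smul_mul_exp_one_sub_smul a b t).hasDerivWithinAt) hbound

end BanachAlgebra

section CStarRing

variable {A : Type*} [NormedRing A] [StarRing A] [CStarRing A] [NormedAlgebra ℝ A]
  [CompleteSpace A]

theorem norm_exp_le_one_of_mem_skewAdjoint {a : A} (ha : a ∈ skewAdjoint A) : ‖exp a‖ ≤ 1 := by
  nontriviality A
  let := NormedAlgebra.restrictScalars ℚ ℝ A
  exact (CStarRing.norm_of_mem_unitary (exp_mem_unitary_of_mem_skewAdjoint ha)).le

theorem norm_exp_sub_exp_le_of_mem_skewAdjoint [StarModule ℝ A] {a b : A} (ha : a ∈ skewAdjoint A)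
    (hb : b ∈ skewAdjoint A) : ‖exp a - exp b‖ ≤ ‖a - b‖ :=
  norm_exp_sub_exp_le_of_norm_exp_smul_le_one
    (fun t _ => norm_exp_le_one_of_mem_skewAdjoint (skewAdjoint.smul_mem t ha))
    (fun t _ => norm_exp_le_one_of_mem_skewAdjoint (skewAdjoint.smul_mem t hb))

end CStarRing

section CStarAlgebra

open Complex

variable {A : Type*} [CStarAlgebra A]

theorem IsSelfAdjoint.I_mul_smul_mem_skewAdjoint {x : A} (hx : IsSelfAdjoint x) (t : ℝ) :
    (I * t) • x ∈ skewAdjoint A :=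
  hx.smul_mem_skewAdjoint (by simp [skewAdjoint.mem_iff])

theorem norm_exp_I_mul_smul_sub_exp_I_mul_smul_le {x y : A} (hx : IsSelfAdjoint x)
    (hy : IsSelfAdjoint y) (t : ℝ) :
    ‖exp ((I * t) • x) - exp ((I * t) • y)‖ ≤ |t| * ‖x - y‖ :=
  calc _ ≤ ‖(I * t) • x - (I * t) • y‖ := norm_exp_sub_exp_le_of_mem_skewAdjoint
          (hx.I_mul_smul_mem_skewAdjoint t) (hy.I_mul_smul_mem_skewAdjoint t)
    _ = |t| * ‖x - y‖ := by rw [← smul_sub, norm_smul]; simp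

theorem MeasureTheory.Integrable.smul_exp_I_mul_smul {f : ℝ → ℂ} (hf : Integrable f) {x : A}
    (hx : IsSelfAdjoint x) : Integrable fun t : ℝ => f t • exp ((I * t) • x) := by
  have hcont : Continuous fun t : ℝ => exp ((I * t) • x) := by
    let := NormedAlgebra.restrictScalars ℚ ℂ A
    fun_prop
  refine hf.norm.mono' (hf.1.smul hcont.aestronglyMeasurable) (ae_of_all _ fun t => ?_)
  rw [norm_smul]
  exact mul_le_of_le_one_right (norm_nonneg _)
    (norm_exp_le_one_of_mem_skewAdjoint (hx.I_mul_smul_mem_skewAdjoint t))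

theorem norm_integral_smul_exp_I_mul_smul_sub_le {f : ℝ → ℂ} (hf : Integrable f)
    (hf' : Integrable fun t : ℝ => t • f t) {x y : A} (hx : IsSelfAdjoint x)
    (hy : IsSelfAdjoint y) :
    ‖(∫ t : ℝ, f t • exp ((I * t) • x)) - ∫ t : ℝ, f t • exp ((I * t) • y)‖ ≤
      ‖x - y‖ * ∫ t : ℝ, |t| * ‖f t‖ := by
  rw [← integral_sub (hf.smul_exp_I_mul_smul hx) (hf.smul_exp_I_mul_smul hy),
    ← integral_const_mul]
  refine norm_integral_le_of_norm_le (by simpa [norm_smul] using hf'.norm.const_mul ‖x - y‖)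
    (ae_of_all _ fun t => ?_)
  calc ‖f t • exp ((I * t) • x) - f t • exp ((I * t) • y)‖
      = ‖f t‖ * ‖exp ((I * t) • x) - exp ((I * t) • y)‖ := by rw [← smul_sub, norm_smul]
    _ ≤ ‖f t‖ * (|t| * ‖x - y‖) := by
        gcongr; exact norm_exp_I_mul_smul_sub_exp_I_mul_smul_le hx hy t
    _ = ‖x - y‖ * (|t| * ‖f t‖) := by ring

end CStarAlgebra

theorem stmt_8_general (N : ℕ) (gHat : ℝ → ℂ)
    (hgHat : Integrable gHat) (hgHat' : Integrable fun y : ℝ => y • gHat y)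
    (X Y : Matrix (Fin N) (Fin N) ℂ) (hX : X.IsHermitian) (hY : Y.IsHermitian) :
    ‖(∫ y : ℝ, gHat y • NormedSpace.exp ((Complex.I * y) • X)) -
        ∫ y : ℝ, gHat y • NormedSpace.exp ((Complex.I * y) • Y)‖ ≤
      ‖X - Y‖ * ∫ y : ℝ, |y| * ‖gHat y‖ :=
  norm_integral_smul_exp_I_mul_smul_sub_le hgHat hgHat' hX.isSelfAdjoint hY.isSelfAdjoint

/-- Let `g(x) = ∫ e^{ixy} gHat(y) dy` with `∫ |y gHat(y)| dy < ∞`.  Then for self-adjoint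
matrices `X, Y`, the functional calculus `g(X) = ∫ gHat(y) e^{iyX} dy` satisfies
`‖g(X) - g(Y)‖ ≤ ‖X - Y‖ · ∫ |y gHat(y)| dy` in operator norm. -/
theorem stmt_8 (N : ℕ) (g : ℝ → ℝ) (gHat : ℝ → ℂ)
    (hgHat : Integrable gHat) (hgHat' : Integrable fun y : ℝ => y • gHat y)
    (hfourier : ∀ x : ℝ, (g x : ℂ) = ∫ y : ℝ, Complex.exp (Complex.I * x * y) * gHat y)
    (X Y : Matrix (Fin N) (Fin N) ℂ) (hX : X.IsHermitian) (hY : Y.IsHermitian) :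
    ‖(∫ y : ℝ, gHat y • NormedSpace.exp ((Complex.I * y) • X)) -
        ∫ y : ℝ, gHat y • NormedSpace.exp ((Complex.I * y) • Y)‖ ≤
      ‖X - Y‖ * ∫ y : ℝ, |y| * ‖gHat y‖ :=
  stmt_8_general N gHat hgHat hgHat' X Y hX hY
end

section
/- Let d : ℕ → ℝ_{≥0} be a family of functions d_n : [0,1] → ℝ_{≥0} satisfying d_n(α) ≤ D^n for all α ∈ [0,1] (where D ≥ 1 is a constant), and d_n(α) ≤ d_n(0) + C ∫_0^α d_{n+m}(β) dβ for constants C ≥ 0 and m ∈ ℕ. Define, for 0 < a < 1/D, g(a, α) = Σ_{n ≥ 0} d_n(α) a^n. Then for all α ∈ [0,1], g(a, α) ≤ g(a, 0) · e^{α C a^{-m}}. -/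
/-!
Rather than applying Grönwall's inequality to `α ↦ g(a, α)` (which would need the `d n` to be
integrable), iterate the integral inequality `k` times against explicit continuous bounds:
`d n α ≤ ∑_{j<k} (Cα)^j/j! d_{n+jm}(0) + (Cα)^k/k! D^{n+km}`.
Multiplying by `aⁿ` and summing, the shifted series satisfy `∑ₙ d_{n+jm}(0) aⁿ ≤ a^{-jm} g(a, 0)`,
so the Taylor part is at most `g(a, 0) e^{Cα/a^m}`, while the remainder is
`(C α D^m)^k / (k! (1 - D a))`, which tends to `0` as `k → ∞`.
-/

open MeasureTheory Set intervalIntegral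

open Finset Nat

theorem mul_integral_mul_pow_div_factorial (C α : ℝ) (j : ℕ) :
    C * ∫ β in (0:ℝ)..α, (C * β) ^ j / j ! = (C * α) ^ (j + 1) / (j + 1)! := by
  simp_rw [mul_pow, mul_div_right_comm]
  rw [intervalIntegral.integral_const_mul, integral_pow, factorial_succ]
  push_cast
  field_simp
  ring

/-- Unlike `intervalIntegral.integral_mono_on`, `f` need not be integrable: then its integral
is the junk value `0`, still below that of the nonnegative `g`. -/
theorem intervalIntegral.integral_le_of_le_of_nonneg {f g : ℝ → ℝ} {α : ℝ} (hα : 0 ≤ α)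
    (hg : IntervalIntegrable g volume 0 α) (hfg : ∀ β ∈ Icc 0 α, f β ≤ g β)
    (hg0 : ∀ β ∈ Icc 0 α, 0 ≤ g β) :
    ∫ β in (0:ℝ)..α, f β ≤ ∫ β in (0:ℝ)..α, g β := by
  by_cases hf : IntervalIntegrable f volume 0 α
  · exact integral_mono_on hα hf hg hfg
  · rw [integral_undef hf]
    exact integral_nonneg hα hg0

/-- The `k`-th iterate of `(yₙ)ₙ ↦ (β ↦ c n + C ∫₀^β y_{n+m})`, started from the constants `B n`. -/
noncomputable def picardBound (c B : ℕ → ℝ) (C : ℝ) (m k n : ℕ) (β : ℝ) : ℝ :=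
  ∑ j ∈ range k, (C * β) ^ j / j ! * c (n + j * m) + (C * β) ^ k / k ! * B (n + k * m)

section picardBound

variable (c B : ℕ → ℝ) (C : ℝ) (m : ℕ)

theorem continuous_picardBound (k n : ℕ) : Continuous (picardBound c B C m k n) := by
  unfold picardBound
  fun_prop

theorem picardBound_nonneg (hc : ∀ n, 0 ≤ c n) (hB : ∀ n, 0 ≤ B n) (hC : 0 ≤ C) (k n : ℕ)
    {β : ℝ} (hβ : 0 ≤ β) : 0 ≤ picardBound c B C m k n β := by
  have hCβ := mul_nonneg hC hβ
  unfold picardBound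
  exact add_nonneg (sum_nonneg fun j _ => mul_nonneg (by positivity) (hc _))
    (mul_nonneg (by positivity) (hB _))

theorem add_mul_integral_picardBound (k n : ℕ) (α : ℝ) :
    c n + C * ∫ β in (0:ℝ)..α, picardBound c B C m k (n + m) β
      = picardBound c B C m (k + 1) n α := by
  have hint : ∀ j, IntervalIntegrable (fun β : ℝ => (C * β) ^ j / j !) volume 0 α :=
    fun j => (by fun_prop : Continuous fun β : ℝ => (C * β) ^ j / j !).intervalIntegrable _ _
  have hsum : IntervalIntegrable
      (fun β : ℝ => ∑ j ∈ range k, (C * β) ^ j / j ! * c (n + m + j * m)) volume 0 α :=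
    (continuous_finsetSum _ fun j _ => by fun_prop).intervalIntegrable _ _
  simp only [picardBound]
  rw [integral_add hsum ((hint k).mul_const _),
    integral_finsetSum fun j _ => (hint j).mul_const _,
    mul_add, mul_sum, sum_range_succ', ← add_assoc]
  simp only [intervalIntegral.integral_mul_const, ← mul_assoc, mul_integral_mul_pow_div_factorial]
  have hshift : ∀ j, n + m + j * m = n + (j + 1) * m := fun j => by ring
  simp only [hshift, pow_zero, factorial_zero, cast_one, div_one, one_mul, zero_mul, add_zero]
  ring

end picardBound

theorem le_picardBound (d : ℕ → ℝ → ℝ) (B : ℕ → ℝ) (C T : ℝ) (m : ℕ) (hC : 0 ≤ C)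
    (hpos : ∀ n, 0 ≤ d n 0) (hbound : ∀ n, ∀ α ∈ Icc 0 T, d n α ≤ B n)
    (hrec : ∀ n, ∀ α ∈ Icc 0 T, d n α ≤ d n 0 + C * ∫ β in (0:ℝ)..α, d (n + m) β)
    (k n : ℕ) {α : ℝ} (hα : α ∈ Icc 0 T) :
    d n α ≤ picardBound (fun n => d n 0) B C m k n α := by
  have hB : ∀ n, 0 ≤ B n := fun n => (hpos n).trans (hbound n 0 ⟨le_rfl, hα.1.trans hα.2⟩)
  induction k generalizing n α with
  | zero => simpa [picardBound] using hbound n α hα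
  | succ k ih =>
    calc d n α ≤ d n 0 + C * ∫ β in (0:ℝ)..α, d (n + m) β := hrec n α hα
      _ ≤ d n 0 + C * ∫ β in (0:ℝ)..α, picardBound (fun n => d n 0) B C m k (n + m) β := by
        gcongr
        exact integral_le_of_le_of_nonneg hα.1
          ((continuous_picardBound _ _ _ _ _ _).intervalIntegrable _ _)
          (fun β hβ => ih _ ⟨hβ.1, hβ.2.trans hα.2⟩)
          (fun β hβ => picardBound_nonneg _ _ _ _ hpos hB hC _ _ hβ.1)
      _ = picardBound (fun n => d n 0) B C m (k + 1) n α :=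
        add_mul_integral_picardBound (fun n => d n 0) B C m k n α

theorem summable_mul_pow_of_le_pow {f : ℕ → ℝ} {D a : ℝ} (h0 : ∀ n, 0 ≤ f n)
    (hf : ∀ n, f n ≤ D ^ n) (ha : 0 ≤ a) (hDa : D * a < 1) :
    Summable fun n => f n * a ^ n := by
  have hD : 0 ≤ D := (h0 1).trans (by simpa using hf 1)
  refine (summable_geometric_of_lt_one (by positivity) hDa).of_nonneg_of_le
    (fun n => mul_nonneg (h0 n) (by positivity)) fun n => ?_
  rw [mul_pow]
  gcongr
  exact hf n

section shift

variable {c : ℕ → ℝ} {a : ℝ}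

theorem summable_nat_add_mul_pow (hs : Summable fun n => c n * a ^ n) (ha : a ≠ 0) (s : ℕ) :
    Summable fun n => c (n + s) * a ^ n := by
  refine (((summable_nat_add_iff s).2 hs).mul_left (a ^ s)⁻¹).congr fun n => ?_
  field_simp
  ring

theorem tsum_nat_add_mul_pow_le (hc : ∀ n, 0 ≤ c n) (hs : Summable fun n => c n * a ^ n)
    (ha : 0 < a) (s : ℕ) :
    ∑' n, c (n + s) * a ^ n ≤ (∑' n, c n * a ^ n) / a ^ s := by
  rw [le_div_iff₀ (by positivity), ← tsum_mul_right]
  calc ∑' n, c (n + s) * a ^ n * a ^ s = ∑' n, c (n + s) * a ^ (n + s) := by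
        simp only [pow_add, mul_assoc]
    _ ≤ ∑' n, c n * a ^ n :=
        ((summable_nat_add_iff s).2 hs).tsum_le_tsum_of_inj (· + s) (add_left_injective s)
          (fun n _ => mul_nonneg (hc n) (by positivity)) (fun _ => le_rfl) hs

end shift

section generatingFunction

variable {c : ℕ → ℝ} {C D a α : ℝ} {m : ℕ}

theorem picardBound_pow_mul_pow (k n : ℕ) :
    picardBound c (D ^ ·) C m k n α * a ^ n
      = ∑ j ∈ range k, (C * α) ^ j / j ! * (c (n + j * m) * a ^ n)
        + (C * α) ^ k / k ! * D ^ (k * m) * (D * a) ^ n := by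
  simp only [picardBound, add_mul, sum_mul, mul_pow, pow_add]
  congr 1
  · exact sum_congr rfl fun j _ => by ring
  · ring

theorem summable_picardBound_pow_mul_pow (hs : Summable fun n => c n * a ^ n) (ha : 0 < a)
    (hD : 0 ≤ D) (hDa : D * a < 1) (k : ℕ) :
    Summable fun n => picardBound c (D ^ ·) C m k n α * a ^ n := by
  simp only [picardBound_pow_mul_pow]
  exact (summable_sum fun j _ => (summable_nat_add_mul_pow hs ha.ne' _).mul_left _).add
    ((summable_geometric_of_lt_one (by positivity) hDa).mul_left _)

theorem tsum_picardBound_pow_mul_pow_le (hc : ∀ n, 0 ≤ c n)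
    (hs : Summable fun n => c n * a ^ n) (ha : 0 < a) (hD : 0 ≤ D) (hDa : D * a < 1)
    (hCα : 0 ≤ C * α) (k : ℕ) :
    ∑' n, picardBound c (D ^ ·) C m k n α * a ^ n
      ≤ (∑' n, c n * a ^ n) * Real.exp (C * α / a ^ m)
        + (C * α * D ^ m) ^ k / k ! * (1 - D * a)⁻¹ := by
  have hshift : ∀ j, Summable fun n => c (n + j * m) * a ^ n :=
    fun j => summable_nat_add_mul_pow hs ha.ne' _
  simp only [picardBound_pow_mul_pow]
  rw [(summable_sum fun j _ => (hshift j).mul_left _).tsum_add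
      ((summable_geometric_of_lt_one (by positivity) hDa).mul_left _),
    Summable.tsum_finsetSum fun j _ => (hshift j).mul_left _, tsum_mul_left,
    tsum_geometric_of_lt_one (by positivity) hDa,
    show (C * α * D ^ m) ^ k / k ! = (C * α) ^ k / k ! * D ^ (k * m) by ring]
  gcongr
  calc ∑ j ∈ range k, ∑' n, (C * α) ^ j / j ! * (c (n + j * m) * a ^ n)
      ≤ ∑ j ∈ range k, (C * α) ^ j / j ! * ((∑' n, c n * a ^ n) / a ^ (j * m)) := by
        gcongr with j
        rw [tsum_mul_left]
        gcongr
        exact tsum_nat_add_mul_pow_le hc hs ha _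
    _ = (∑' n, c n * a ^ n) * ∑ j ∈ range k, (C * α / a ^ m) ^ j / j ! := by
        rw [mul_sum]
        refine sum_congr rfl fun j _ => ?_
        rw [div_pow, pow_mul]
        ring
    _ ≤ (∑' n, c n * a ^ n) * Real.exp (C * α / a ^ m) :=
        mul_le_mul_of_nonneg_left (Real.sum_le_exp_of_nonneg (by positivity) k)
          (tsum_nonneg fun n => mul_nonneg (hc n) (by positivity))

end generatingFunction

theorem stmt_12_general (d : ℕ → ℝ → ℝ) (D C : ℝ) (m : ℕ) (hC : 0 ≤ C)
    (hpos : ∀ n, ∀ α ∈ Icc (0:ℝ) 1, 0 ≤ d n α)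
    (hbound : ∀ n, ∀ α ∈ Icc (0:ℝ) 1, d n α ≤ D ^ n)
    (hrec : ∀ n, ∀ α ∈ Icc (0:ℝ) 1,
      d n α ≤ d n 0 + C * ∫ β in (0:ℝ)..α, d (n + m) β)
    (a : ℝ) (ha : 0 < a) (haD : a < 1 / D) :
    ∀ α ∈ Icc (0:ℝ) 1,
      (∑' n : ℕ, d n α * a ^ n) ≤
        (∑' n : ℕ, d n 0 * a ^ n) * Real.exp (α * C / a ^ m) := by
  intro α hα
  have h0 : (0:ℝ) ∈ Icc (0:ℝ) 1 := left_mem_Icc.2 zero_le_one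
  have hD : 0 < D := one_div_pos.1 (ha.trans haD)
  have hDa : D * a < 1 := by rwa [lt_div_iff₀ hD, mul_comm] at haD
  have hsum : ∀ γ ∈ Icc (0:ℝ) 1, Summable fun n => d n γ * a ^ n := fun γ hγ =>
    summable_mul_pow_of_le_pow (hpos · γ hγ) (hbound · γ hγ) ha.le hDa
  have hCα : 0 ≤ C * α := mul_nonneg hC hα.1
  have hk : ∀ k : ℕ, ∑' n, d n α * a ^ n ≤ (∑' n, d n 0 * a ^ n) * Real.exp (C * α / a ^ m)
      + (C * α * D ^ m) ^ k / k ! * (1 - D * a)⁻¹ := fun k =>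
    (Summable.tsum_le_tsum (fun n => mul_le_mul_of_nonneg_right
        (le_picardBound d _ C 1 m hC (hpos · 0 h0) hbound hrec k n hα) (by positivity))
      (hsum α hα) (summable_picardBound_pow_mul_pow (hsum 0 h0) ha hD.le hDa k)).trans
    (tsum_picardBound_pow_mul_pow_le (hpos · 0 h0) (hsum 0 h0) ha hD.le hDa hCα k)
  have hlim := ((FloorSemiring.tendsto_pow_div_factorial_atTop (C * α * D ^ m)).mul_const
    (1 - D * a)⁻¹).const_add ((∑' n, d n 0 * a ^ n) * Real.exp (C * α / a ^ m))
  rw [zero_mul, add_zero] at hlim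
  rw [mul_comm α C]
  exact ge_of_tendsto' hlim hk

/-- Grönwall-type bound: if `d_n : [0,1] → [0, D^n]` satisfies
`d_n(α) ≤ d_n(0) + C ∫_0^α d_{n+m}(β) dβ`, then for `0 < a < 1/D` the generating
function `g(a, α) = Σ_n d_n(α) aⁿ` satisfies `g(a, α) ≤ g(a, 0) e^{α C a^{-m}}`. -/
theorem stmt_12 (d : ℕ → ℝ → ℝ) (D C : ℝ) (m : ℕ) (hD : 1 ≤ D) (hC : 0 ≤ C)
    (hpos : ∀ n, ∀ α ∈ Icc (0:ℝ) 1, 0 ≤ d n α)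
    (hbound : ∀ n, ∀ α ∈ Icc (0:ℝ) 1, d n α ≤ D ^ n)
    (hrec : ∀ n, ∀ α ∈ Icc (0:ℝ) 1,
      d n α ≤ d n 0 + C * ∫ β in (0:ℝ)..α, d (n + m) β)
    (a : ℝ) (ha : 0 < a) (haD : a < 1 / D) :
    ∀ α ∈ Icc (0:ℝ) 1,
      (∑' n : ℕ, d n α * a ^ n) ≤
        (∑' n : ℕ, d n 0 * a ^ n) * Real.exp (α * C / a ^ m) :=
  stmt_12_general d D C m hC hpos hbound hrec a ha haD
end
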